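/- Let ħ > 0 and let Σ be a real symmetric positive-definite 2N×2N matrix with symplectic eigenvalues μ_1 ≥ … ≥ μ_N > 0. Then the complex Hermitian matrix Σ + (iħ/2)J is positive semidefinite if and only if μ_j ≥ ħ/2 for every j = 1, …, N (equivalently, if and only if the smallest symplectic eigenvalue μ_N satisfies μ_N ≥ ħ/2). -/

import Mathlib

open MeasureTheory Matrix Complex Real
open scoped ComplexOrder

/-- The standard symplectic matrix `J = [[0, I], [-I, 0]]` (N×N blocks). -/
noncomputable def stdJ (N : ℕ) : Matrix (Fin N ⊕ Fin N) (Fin N ⊕ Fin N) ℝ :=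
  Matrix.fromBlocks 0 1 (-1) 0

/-- `μ` is a symplectic eigenvalue of the real `2N×2N` matrix `M` if `μ > 0` and
`iμ` is an eigenvalue of the complex matrix `JM`. -/
noncomputable def IsSympEig {N : ℕ} (M : Matrix (Fin N ⊕ Fin N) (Fin N ⊕ Fin N) ℝ)
    (μ : ℝ) : Prop :=
  0 < μ ∧ ∃ v : (Fin N ⊕ Fin N) → ℂ, v ≠ 0 ∧
    ((stdJ N * M).map (fun r => (r : ℂ))) *ᵥ v = (Complex.I * (μ : ℂ)) • v

section Aux

variable {N : ℕ}

lemma stdJ_mul_stdJ (N : ℕ) : stdJ N * stdJ N = -1 := by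
  simp [stdJ, Matrix.fromBlocks_multiply, Matrix.fromBlocks_neg, ← Matrix.fromBlocks_one]

lemma stdJ_transpose (N : ℕ) : (stdJ N)ᵀ = -stdJ N := by
  simp [stdJ, Matrix.fromBlocks_transpose, Matrix.fromBlocks_neg]

lemma map_mulVec_star (A : Matrix (Fin N ⊕ Fin N) (Fin N ⊕ Fin N) ℝ)
    (w : (Fin N ⊕ Fin N) → ℂ) :
    (A.map (fun r => (r : ℂ))) *ᵥ (star w) = star ((A.map (fun r => (r : ℂ))) *ᵥ w) := by
  funext i
  simp only [Matrix.mulVec, dotProduct, Matrix.map_apply, Pi.star_apply]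
  rw [star_sum]
  congr 1; funext j
  rw [star_mul', Complex.star_def, Complex.conj_ofReal]

lemma mapC_mul {n : Type*} [Fintype n] [DecidableEq n] (A B : Matrix n n ℝ) :
    (A * B).map (fun r => (r : ℂ)) = A.map (fun r => (r : ℂ)) * B.map (fun r => (r : ℂ)) :=
  Matrix.map_mul (f := Complex.ofRealHom)

lemma mapC_det {n : Type*} [Fintype n] [DecidableEq n] (A : Matrix n n ℝ) :
    (A.map (fun r => (r : ℂ))).det = ((A.det : ℝ) : ℂ) :=
  (RingHom.map_det Complex.ofRealHom A).symm

end Aux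

/-- For a real symmetric positive definite `2N×2N` matrix `Σ` with symplectic spectrum
`μ 0 ≥ ⋯ ≥ μ (N-1) > 0`, the complex Hermitian matrix `Σ + (iℏ/2)J` is positive
semidefinite iff every symplectic eigenvalue satisfies `μ_j ≥ ℏ/2`. -/
theorem posSemidef_iff_sympEig_ge_half_hbar
    {N : ℕ} (ℏ : ℝ) (hℏ : 0 < ℏ)
    (Sig : Matrix (Fin N ⊕ Fin N) (Fin N ⊕ Fin N) ℝ) (hSig : Sig.PosDef)
    (μ : Fin N → ℝ) (hμpos : ∀ i, 0 < μ i) (hμmono : Antitone μ)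
    (hspec : ∀ c : ℝ, IsSympEig Sig c ↔ ∃ i, c = μ i) :
    (Sig.map (fun r => (r : ℂ))
        + (Complex.I * ((ℏ / 2 : ℝ) : ℂ)) • (stdJ N).map (fun r => (r : ℂ))).PosSemidef
      ↔ ∀ j, ℏ / 2 ≤ μ j := by
  classical
  set c : ℝ := ℏ / 2 with hc
  have hcpos : 0 < c := by positivity
  set Jc : Matrix (Fin N ⊕ Fin N) (Fin N ⊕ Fin N) ℂ := (stdJ N).map (fun r => (r : ℂ)) with hJc
  set Sc : Matrix (Fin N ⊕ Fin N) (Fin N ⊕ Fin N) ℂ := Sig.map (fun r => (r : ℂ)) with hSc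
  -- basic facts about Jc
  have hJJ : Jc * Jc = -1 := by
    rw [hJc, ← mapC_mul, stdJ_mul_stdJ]
    ext i j
    simp [Matrix.map_apply, Matrix.one_apply, apply_ite]
  have hJcH : Jcᴴ = -Jc := by
    rw [hJc]
    ext i j
    simp only [Matrix.conjTranspose_apply, Matrix.map_apply, Matrix.neg_apply,
      Complex.star_def, Complex.conj_ofReal]
    rw [show stdJ N j i = (stdJ N)ᵀ i j from rfl, stdJ_transpose]
    simp
  -- the real square root of Sig, complexified
  have hPSD := hSig.posSemidef
  open scoped MatrixOrder in
  set R : Matrix (Fin N ⊕ Fin N) (Fin N ⊕ Fin N) ℝ := CFC.sqrt Sig with hR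
  open scoped MatrixOrder in
  have hRmul : R * R = Sig := CFC.sqrt_mul_sqrt_self Sig hPSD.nonneg
  open scoped MatrixOrder in
  have hRsym : Rᴴ = R := (CFC.sqrt_nonneg Sig).posSemidef.1
  have hdetR : R.det ≠ 0 := by
    intro h
    have : Sig.det = 0 := by rw [← hRmul, Matrix.det_mul, h, mul_zero]
    exact (ne_of_gt hSig.det_pos) this
  set S : Matrix (Fin N ⊕ Fin N) (Fin N ⊕ Fin N) ℂ := R.map (fun r => (r : ℂ)) with hS
  have hSH : Sᴴ = S := by
    rw [hS]
    ext i j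
    simp only [Matrix.conjTranspose_apply, Matrix.map_apply, Complex.star_def,
      Complex.conj_ofReal]
    rw [show R j i = Rᴴ i j from rfl, hRsym]
  have hSS : S * S = Sc := by
    rw [hS, hSc, ← mapC_mul, hRmul]
  have hdetS : IsUnit S.det := by
    rw [hS, mapC_det]
    exact isUnit_iff_ne_zero.mpr (by exact_mod_cast hdetR)
  have hSinv : S * S⁻¹ = 1 := Matrix.mul_nonsing_inv S hdetS
  have hinvS : S⁻¹ * S = 1 := Matrix.nonsing_inv_mul S hdetS
  -- the Hermitian matrix H = i S Jc S
  set L : Matrix (Fin N ⊕ Fin N) (Fin N ⊕ Fin N) ℂ := S * Jc * S with hL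
  set H : Matrix (Fin N ⊕ Fin N) (Fin N ⊕ Fin N) ℂ := Complex.I • L with hH
  have hHH : H.IsHermitian := by
    show Hᴴ = H
    rw [hH, Matrix.conjTranspose_smul, hL, Matrix.conjTranspose_mul, Matrix.conjTranspose_mul,
      hSH, hJcH]
    simp [Matrix.mul_neg, Matrix.neg_mul, Complex.star_def]
    rw [Matrix.mul_assoc]
  -- invertibility of Jc and Sc
  have hdetJc : IsUnit Jc.det := by
    apply Matrix.isUnit_det_of_right_inverse (B := -Jc)
    rw [Matrix.mul_neg, hJJ, neg_neg]
  have hdetSc : IsUnit Sc.det := by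
    rw [← hSS, Matrix.det_mul]; exact hdetS.mul hdetS
  have hdetJS : IsUnit (Jc * Sc).det := by rw [Matrix.det_mul]; exact hdetJc.mul hdetSc
  have hinjJS : ∀ w : (Fin N ⊕ Fin N) → ℂ, (Jc * Sc) *ᵥ w = 0 → w = 0 := by
    intro w hw
    have : (Jc * Sc)⁻¹ *ᵥ ((Jc * Sc) *ᵥ w) = w := by
      rw [Matrix.mulVec_mulVec, Matrix.nonsing_inv_mul _ hdetJS, Matrix.one_mulVec]
    rw [hw, Matrix.mulVec_zero] at this
    exact this.symm
  -- spectral data of H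
  set U : Matrix (Fin N ⊕ Fin N) (Fin N ⊕ Fin N) ℂ := (hHH.eigenvectorUnitary : Matrix (Fin N ⊕ Fin N) (Fin N ⊕ Fin N) ℂ)
    with hU
  set lam : (Fin N ⊕ Fin N) → ℝ := hHH.eigenvalues with hlam
  have hUU : star U * U = 1 := Matrix.mem_unitaryGroup_iff'.mp hHH.eigenvectorUnitary.2
  have hUU' : U * star U = 1 := Matrix.mem_unitaryGroup_iff.mp hHH.eigenvectorUnitary.2
  have hHspec : H = U * Matrix.diagonal (fun k => ((lam k : ℝ) : ℂ)) * star U :=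
    hHH.spectral_theorem
  have hvec : ∀ k, H *ᵥ ⇑(hHH.eigenvectorBasis k)
      = ((lam k : ℝ) : ℂ) • ⇑(hHH.eigenvectorBasis k) := by
    intro k
    rw [hHH.mulVec_eigenvectorBasis]
    funext i
    simp [Complex.real_smul, hlam]
  have hbne : ∀ k, (⇑(hHH.eigenvectorBasis k) : (Fin N ⊕ Fin N) → ℂ) ≠ 0 := by
    intro k h
    apply hHH.eigenvectorBasis.orthonormal.ne_zero k
    ext i
    exact congrFun h i
  -- From an eigenvector of H with eigenvalue t, produce an eigenvector of Jc * Sc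
  have hmain : ∀ (t : ℝ) (v : (Fin N ⊕ Fin N) → ℂ), v ≠ 0 → H *ᵥ v = ((t : ℝ) : ℂ) • v →
      ∃ w : (Fin N ⊕ Fin N) → ℂ, w ≠ 0 ∧
        (Jc * Sc) *ᵥ w = (-(Complex.I * (t : ℂ))) • w := by
    intro t v hv0 hv
    refine ⟨S⁻¹ *ᵥ v, ?_, ?_⟩
    · intro h
      apply hv0
      have h2 : S *ᵥ (S⁻¹ *ᵥ v) = 0 := by rw [h, Matrix.mulVec_zero]
      rwa [Matrix.mulVec_mulVec, hSinv, Matrix.one_mulVec] at h2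
    · have hLv : L *ᵥ v = (-(Complex.I * (t : ℂ))) • v := by
        have h1 : Complex.I • (L *ᵥ v) = ((t : ℝ) : ℂ) • v := by
          rw [← Matrix.smul_mulVec, ← hH, hv]
        calc L *ᵥ v = (-Complex.I) • (Complex.I • (L *ᵥ v)) := by
              rw [smul_smul]
              simp
          _ = (-Complex.I) • (((t : ℝ) : ℂ) • v) := by rw [h1]
          _ = (-(Complex.I * (t : ℂ))) • v := by rw [smul_smul]; ring_nf
      have h2 : (Jc * Sc) * S⁻¹ = S⁻¹ * L := by
        rw [← hSS, hL]
        calc Jc * (S * S) * S⁻¹ = Jc * S * (S * S⁻¹) := by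
              simp only [Matrix.mul_assoc]
          _ = Jc * S := by rw [hSinv, Matrix.mul_one]
          _ = (S⁻¹ * S) * (Jc * S) := by rw [hinvS, Matrix.one_mul]
          _ = S⁻¹ * (S * Jc * S) := by simp only [Matrix.mul_assoc]
      rw [Matrix.mulVec_mulVec, h2, ← Matrix.mulVec_mulVec, hLv, Matrix.mulVec_smul]
  -- every eigenvalue of H is a symplectic eigenvalue in absolute value
  have hlamkey : ∀ k, lam k ≠ 0 ∧ ∃ i, |lam k| = μ i := by
    intro k
    obtain ⟨w, hw0, hw⟩ := hmain (lam k) _ (hbne k) (hvec k)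
    have hmapJS : ((stdJ N * Sig).map (fun r => (r : ℂ))) = Jc * Sc := mapC_mul _ _
    have hne : lam k ≠ 0 := by
      intro h0
      apply hw0
      apply hinjJS
      rw [hw, h0]
      simp
    refine ⟨hne, ?_⟩
    rcases lt_or_gt_of_ne hne with hneg | hpos
    · have : IsSympEig Sig (-(lam k)) := by
        refine ⟨by linarith, w, hw0, ?_⟩
        rw [hmapJS, hw]
        congr 1
        push_cast
        ring
      obtain ⟨i, hi⟩ := (hspec _).mp this
      exact ⟨i, by rw [abs_of_neg hneg]; exact hi⟩
    · have : IsSympEig Sig (lam k) := by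
        refine ⟨hpos, star w, by simpa [star_eq_zero] using hw0, ?_⟩
        have := map_mulVec_star (stdJ N * Sig) w
        rw [hmapJS] at this
        rw [hmapJS, this, hw]
        rw [star_smul]
        congr 1
        simp [Complex.star_def]
      obtain ⟨i, hi⟩ := (hspec _).mp this
      exact ⟨i, by rw [abs_of_pos hpos]; exact hi⟩
  -- the quadratic form
  have hMeq : Sig.map (fun r => (r : ℂ))
        + (Complex.I * ((ℏ / 2 : ℝ) : ℂ)) • (stdJ N).map (fun r => (r : ℂ))
      = Sc + (Complex.I * (c : ℂ)) • Jc := rfl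
  rw [hMeq]
  constructor
  · -- forward direction
    intro hM j
    obtain ⟨hj, v, hv0, hv⟩ := (hspec (μ j)).mpr ⟨j, rfl⟩
    rw [show ((stdJ N * Sig).map (fun r => (r : ℂ))) = Jc * Sc from mapC_mul _ _] at hv
    set q : ℂ := dotProduct (star v) (Sc *ᵥ v) with hqdef
    set p : ℂ := dotProduct (star v) (Jc *ᵥ v) with hpdef
    -- positivity of q
    have hqpos : 0 < q := by
      have hSv : S *ᵥ v ≠ 0 := by
        intro h
        apply hv0
        have h2 : S⁻¹ *ᵥ (S *ᵥ v) = 0 := by rw [h, Matrix.mulVec_zero]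
        rwa [Matrix.mulVec_mulVec, hinvS, Matrix.one_mulVec] at h2
      have hq2 : q = dotProduct (star (S *ᵥ v)) (S *ᵥ v) := by
        rw [hqdef, ← hSS, ← Matrix.mulVec_mulVec, Matrix.dotProduct_mulVec,
          Matrix.star_mulVec, hSH]
      rw [hq2]
      exact Matrix.dotProduct_star_self_pos_iff.mpr hSv
    -- relation between q and p
    have hp : (-(Complex.I * (μ j : ℂ))) * p = q := by
      have h1 : Sc *ᵥ v = (-(Complex.I * (μ j : ℂ))) • (Jc *ᵥ v) := by
        have h2 : Jc *ᵥ ((Jc * Sc) *ᵥ v) = Jc *ᵥ ((Complex.I * (μ j : ℂ)) • v) := by rw [hv]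
        rw [Matrix.mulVec_mulVec, ← Matrix.mul_assoc, hJJ, Matrix.mulVec_smul] at h2
        have h3 : (-1 * Sc) *ᵥ v = -(Sc *ᵥ v) := by rw [neg_one_mul, Matrix.neg_mulVec]
        rw [h3] at h2
        have h4 := congrArg Neg.neg h2
        rw [neg_neg] at h4
        rw [h4, ← neg_smul]
      rw [hqdef, h1, dotProduct_smul, hpdef]
      simp [smul_eq_mul]
    -- the quadratic form value
    have hT := (Matrix.posSemidef_iff_dotProduct_mulVec.mp hM).2 v
    set T : ℂ := dotProduct (star v) ((Sc + (Complex.I * (c : ℂ)) • Jc) *ᵥ v) with hTdef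
    have hTeq : ((μ j : ℝ) : ℂ) * T = (((μ j : ℝ) - c : ℝ) : ℂ) * q := by
      have hmup : ((μ j : ℝ) : ℂ) * p = Complex.I * q := by
        have := congrArg (fun z => Complex.I * z) hp
        rw [← this]
        ring_nf
        rw [Complex.I_sq]
        ring
      rw [hTdef, Matrix.add_mulVec, dotProduct_add, Matrix.smul_mulVec,
        dotProduct_smul, ← hqdef, ← hpdef]
      push_cast
      rw [smul_eq_mul]
      calc (μ j : ℂ) * (q + Complex.I * (c:ℂ) * p)
          = (μ j : ℂ) * q + Complex.I * (c:ℂ) * ((μ j : ℂ) * p) := by ring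
        _ = (μ j : ℂ) * q + Complex.I * (c:ℂ) * (Complex.I * q) := by rw [hmup]
        _ = (μ j : ℂ) * q + (Complex.I * Complex.I) * (c:ℂ) * q := by ring
        _ = (μ j : ℂ) * q - (c:ℂ) * q := by rw [Complex.I_mul_I]; ring
        _ = ((μ j : ℂ) - (c:ℂ)) * q := by ring
    -- pass to real parts
    have hqre : 0 < q.re ∧ q.im = 0 := by
      rw [Complex.lt_def] at hqpos
      exact ⟨by simpa using hqpos.1, by simpa using hqpos.2.symm⟩
    have hTre : 0 ≤ T.re ∧ T.im = 0 := by
      rw [Complex.le_def] at hT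
      exact ⟨by simpa using hT.1, by simpa using hT.2.symm⟩
    have hre := congrArg Complex.re hTeq
    simp only [Complex.mul_re, Complex.ofReal_re, Complex.ofReal_im, hqre.2, hTre.2,
      mul_zero, zero_mul, sub_zero] at hre
    -- hre : μ j * T.re = (μ j - c) * q.re
    nlinarith [hμpos j, hqre.1, hTre.1]
  · -- backward direction
    intro hge
    have hlamne : ∀ k, ((lam k : ℝ) : ℂ) ≠ 0 := by
      intro k
      exact_mod_cast (hlamkey k).1
    have hdk : ∀ k, 0 ≤ 1 + c * (lam k)⁻¹ := by
      intro k
      obtain ⟨hne, i, hi⟩ := hlamkey k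
      rcases lt_or_gt_of_ne hne with hneg | hpos
      · have habs : -(lam k) = μ i := by rw [← abs_of_neg hneg, hi]
        have hcle : c ≤ μ i := hge i
        have hmi := hμpos i
        have hlk : lam k = -(μ i) := by linarith
        rw [hlk]
        have h1 : c / μ i ≤ 1 := (div_le_one hmi).mpr hcle
        have h2 : c * (-(μ i))⁻¹ = -(c / μ i) := by
          rw [inv_neg, mul_neg, div_eq_mul_inv]
        rw [h2]
        linarith
      · have h3 : 0 < c * (lam k)⁻¹ := by positivity
        linarith
    set G : Matrix (Fin N ⊕ Fin N) (Fin N ⊕ Fin N) ℂ :=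
      U * Matrix.diagonal (fun k => ((lam k : ℝ) : ℂ)⁻¹) * star U with hG
    have hkeymul : ∀ d e : (Fin N ⊕ Fin N) → ℂ,
        (U * Matrix.diagonal d * star U) * (U * Matrix.diagonal e * star U)
          = U * Matrix.diagonal (fun k => d k * e k) * star U := by
      intro d e
      calc (U * Matrix.diagonal d * star U) * (U * Matrix.diagonal e * star U)
          = U * Matrix.diagonal d * ((star U * U) * (Matrix.diagonal e * star U)) := by
            simp only [Matrix.mul_assoc]
        _ = U * Matrix.diagonal d * (Matrix.diagonal e * star U) := by
            rw [hUU, Matrix.one_mul]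
        _ = U * (Matrix.diagonal d * Matrix.diagonal e) * star U := by
            simp only [Matrix.mul_assoc]
        _ = U * Matrix.diagonal (fun k => d k * e k) * star U := by
            rw [Matrix.diagonal_mul_diagonal]
    have hGH : G * H = 1 := by
      rw [hHspec, hG, hkeymul]
      have hdiagone : Matrix.diagonal (fun k => ((lam k : ℝ) : ℂ)⁻¹ * ((lam k : ℝ) : ℂ))
          = (1 : Matrix (Fin N ⊕ Fin N) (Fin N ⊕ Fin N) ℂ) := by
        rw [show (fun k => ((lam k : ℝ) : ℂ)⁻¹ * ((lam k : ℝ) : ℂ)) = fun _ => (1:ℂ) from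
          funext fun k => inv_mul_cancel₀ (hlamne k), Matrix.diagonal_one]
      rw [hdiagone, Matrix.mul_one, hUU']
    have hSGS : S * G * S = Complex.I • Jc := by
      have h1 : G * L = (-Complex.I) • (1 : Matrix (Fin N ⊕ Fin N) (Fin N ⊕ Fin N) ℂ) := by
        have h2 : Complex.I • (G * L) = 1 := by
          rw [← mul_smul_comm, ← hH, hGH]
        calc G * L = (-Complex.I) • (Complex.I • (G * L)) := by rw [smul_smul]; simp
          _ = (-Complex.I) • (1 : Matrix (Fin N ⊕ Fin N) (Fin N ⊕ Fin N) ℂ) := by rw [h2]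
      have e1 : S * (G * L) * S⁻¹ = (S * G * S) * Jc := by
        rw [hL]
        calc S * (G * (S * Jc * S)) * S⁻¹
            = S * G * S * Jc * (S * S⁻¹) := by simp only [Matrix.mul_assoc]
          _ = S * G * S * Jc := by rw [hSinv, Matrix.mul_one]
      have e2 : S * (G * L) * S⁻¹
          = (-Complex.I) • (1 : Matrix (Fin N ⊕ Fin N) (Fin N ⊕ Fin N) ℂ) := by
        rw [h1, mul_smul_comm, smul_mul_assoc, Matrix.mul_one, hSinv]
      have h3 : (S * G * S) * Jc = (-Complex.I) • (1 : Matrix (Fin N ⊕ Fin N) (Fin N ⊕ Fin N) ℂ) :=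
        by rw [← e1, e2]
      have hJcinv : Jc * (-Jc) = 1 := by rw [Matrix.mul_neg, hJJ, neg_neg]
      calc S * G * S = (S * G * S) * (Jc * (-Jc)) := by rw [hJcinv, Matrix.mul_one]
        _ = ((S * G * S) * Jc) * (-Jc) := by simp only [Matrix.mul_assoc]
        _ = ((-Complex.I) • (1 : Matrix (Fin N ⊕ Fin N) (Fin N ⊕ Fin N) ℂ)) * (-Jc) := by
            rw [h3]
        _ = Complex.I • Jc := by
            rw [smul_mul_assoc, Matrix.one_mul]
            simp
    -- the PSD decomposition
    have hdiagPSD : (Matrix.diagonal (fun k => ((1 + c * (lam k)⁻¹ : ℝ) : ℂ))).PosSemidef :=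
      Matrix.posSemidef_diagonal_iff.mpr fun k => Complex.zero_le_real.mpr (hdk k)
    have hfinal : Sc + (Complex.I * (c : ℂ)) • Jc
        = (S * U) * Matrix.diagonal (fun k => ((1 + c * (lam k)⁻¹ : ℝ) : ℂ)) * (S * U)ᴴ := by
      have hdd : Matrix.diagonal (fun k => ((1 + c * (lam k)⁻¹ : ℝ) : ℂ))
          = 1 + (c : ℂ) • Matrix.diagonal (fun k => ((lam k : ℝ) : ℂ)⁻¹) := by
        ext i j
        by_cases h : i = j
        · subst h
          simp only [Matrix.diagonal_apply_eq, Matrix.add_apply, Matrix.one_apply_eq,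
            Matrix.smul_apply, smul_eq_mul]
          push_cast
          ring
        · simp [Matrix.diagonal_apply_ne _ h, Matrix.one_apply_ne h]
      have hadj : (S * U)ᴴ = star U * S := by
        rw [Matrix.conjTranspose_mul, hSH, Matrix.star_eq_conjTranspose]
      rw [hdd, hadj]
      calc Sc + (Complex.I * (c : ℂ)) • Jc
          = S * S + (c : ℂ) • (S * G * S) := by
            rw [hSS, hSGS, smul_smul, mul_comm Complex.I (c:ℂ)]
        _ = S * (U * star U) * S
            + (c : ℂ) • (S * (U * Matrix.diagonal (fun k => ((lam k : ℝ) : ℂ)⁻¹) * star U) * S)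
            := by rw [hUU', Matrix.mul_one, hG]
        _ = S * U * ((1 + (c : ℂ) • Matrix.diagonal (fun k => ((lam k : ℝ) : ℂ)⁻¹))
              * (star U * S)) := by
            rw [Matrix.add_mul, Matrix.one_mul, Matrix.mul_add]
            rw [Matrix.smul_mul, Matrix.mul_smul]
            simp only [Matrix.mul_assoc]
        _ = S * U * (1 + (c : ℂ) • Matrix.diagonal (fun k => ((lam k : ℝ) : ℂ)⁻¹))
              * (star U * S) := by simp only [Matrix.mul_assoc]
    rw [hfinal]
    exact hdiagPSD.mul_mul_conjTranspose_same (S * U)
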